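/- arXiv:1712.08872 — 3 statements merged into one kernel-verified Lean document; each statement's English description precedes it below -/
import Mathlib

section
/- If A is a block tridiagonal matrix with invertible diagonal blocks, and P is the permutation matrix corresponding to the red-black (odd-even) ordering of block rows, then the Schur complement of the 'red' (odd-indexed) block-diagonal part in PAP^T is again block tridiagonal. -/
open Matrix Finset

/-- For a block tridiagonal matrix `A` (blocks `A i j` of size `m × m`,
vanishing when `|i - j| > 1`) with invertible diagonal blocks, the Schur complement of the
red (odd-indexed) block-diagonal part in the red-black permuted matrix `P A Pᵀ` is again
block tridiagonal: its block at even indices `i, j` is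
`A i j - ∑ (odd o), A i o * (A o o)⁻¹ * A o j`, and this vanishes whenever the even
indices `i, j` are not equal or adjacent in the even ordering, i.e. when `|i - j| > 2`. -/
theorem schur_complement_red_black_block_tridiagonal
    (n m : ℕ) (A : Fin n → Fin n → Matrix (Fin m) (Fin m) ℝ)
    (htri : ∀ i j : Fin n, ((i : ℕ) + 1 < (j : ℕ) ∨ (j : ℕ) + 1 < (i : ℕ)) → A i j = 0)
    (hinv : ∀ i : Fin n, IsUnit (A i i)) :
    ∀ i j : Fin n, Even (i : ℕ) → Even (j : ℕ) →
      ((i : ℕ) + 2 < (j : ℕ) ∨ (j : ℕ) + 2 < (i : ℕ)) →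
      A i j - ∑ o ∈ Finset.univ.filter (fun o : Fin n => Odd (o : ℕ)),
          A i o * (A o o)⁻¹ * A o j = 0 := by
  intro i j _ _ hij
  have h1 : A i j = 0 := htri i j (by omega)
  have h2 : ∀ o ∈ Finset.univ.filter (fun o : Fin n => Odd (o : ℕ)),
      A i o * (A o o)⁻¹ * A o j = 0 := by
    intro o _
    by_cases h : (i : ℕ) + 1 < (o : ℕ) ∨ (o : ℕ) + 1 < (i : ℕ)
    · rw [htri i o h]; simp
    · rw [htri o j (by omega)]; simp
  rw [Finset.sum_eq_zero h2, h1, sub_zero]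
end

section
/- For a block tridiagonal matrix under red-black ordering, the elimination of the odd-indexed blocks is equivalent to block Gaussian elimination without pivoting on the permuted system (PAP^T)(Pu) = Pf: the reduced system obtained by cyclic reduction equals the Schur complement system, and a solution of the reduced system together with back-substitution yields the solution of the original system Au = f. -/
open Matrix

/-- For a block tridiagonal matrix under red-black ordering, written in
`2×2` block form `P A Pᵀ = [[D, E], [F, C]]` with `D` the (invertible, block diagonal)
red part, solving `(P A Pᵀ)(P u) = P f` by block Gaussian elimination without pivoting is
equivalent to cyclic reduction: the permuted system holds iff the black unknowns solve the
reduced Schur complement system `(C - F D⁻¹ E) u_b = f_b - F D⁻¹ f_r` and the red unknowns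
are recovered by back-substitution `u_r = D⁻¹ (f_r - E u_b)`. -/
theorem cyclic_reduction_eq_schur_and_back_substitution
    (p q : ℕ) (D : Matrix (Fin p) (Fin p) ℝ) (E : Matrix (Fin p) (Fin q) ℝ)
    (F : Matrix (Fin q) (Fin p) ℝ) (C : Matrix (Fin q) (Fin q) ℝ)
    [Invertible D]
    (ur fr : Fin p → ℝ) (ub fb : Fin q → ℝ) :
    (Matrix.fromBlocks D E F C) *ᵥ (Sum.elim ur ub) = Sum.elim fr fb ↔
      ((C - F * D⁻¹ * E) *ᵥ ub = fb - (F * D⁻¹) *ᵥ fr ∧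
        ur = D⁻¹ *ᵥ (fr - E *ᵥ ub)) := by
  rw [Matrix.fromBlocks_mulVec, Sum.elim_eq_iff]
  simp only [Sum.elim_comp_inl, Sum.elim_comp_inr]
  constructor
  · rintro ⟨h1, h2⟩
    have hDur : D *ᵥ ur = fr - E *ᵥ ub := by rw [← h1]; abel
    have hur : ur = D⁻¹ *ᵥ (fr - E *ᵥ ub) := by
      rw [← hDur, Matrix.mulVec_mulVec, Matrix.inv_mul_of_invertible, Matrix.one_mulVec]
    have hFur : F *ᵥ ur = (F * D⁻¹) *ᵥ fr - (F * D⁻¹ * E) *ᵥ ub := by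
      rw [hur, Matrix.mulVec_mulVec, Matrix.mulVec_sub, Matrix.mulVec_mulVec, Matrix.mul_assoc]
    refine ⟨?_, hur⟩
    rw [Matrix.sub_mulVec, ← h2, hFur]
    abel
  · rintro ⟨h1, h2⟩
    have hDur : D *ᵥ ur = fr - E *ᵥ ub := by
      rw [h2, Matrix.mulVec_mulVec, Matrix.mul_inv_of_invertible, Matrix.one_mulVec]
    have hFur : F *ᵥ ur = (F * D⁻¹) *ᵥ fr - (F * D⁻¹ * E) *ᵥ ub := by
      rw [h2, Matrix.mulVec_mulVec, Matrix.mulVec_sub, Matrix.mulVec_mulVec, Matrix.mul_assoc]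
    rw [Matrix.sub_mulVec] at h1
    constructor
    · rw [hDur]; abel
    · rw [hFur]
      linear_combination (norm := abel) h1
end

section
/- The red-black permutation matrix P on n = 2m indices (sending odd positions to the first m slots and even positions to the last m slots, preserving order within each class) is a bijection, and conjugation A ↦ PAP^T maps a tridiagonal matrix to a 2×2 block matrix whose diagonal blocks are diagonal matrices and whose off-diagonal blocks are (lower/upper) bidiagonal. -/
open Matrix

/-- The red-black (odd-even) ordering on `n = 2m` indices: slot `j < m` holds the odd index
`2j + 1`, and slot `j ≥ m` holds the even index `2(j - m)`; odd indices come first, then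
even indices, each class in increasing order. -/
def redBlack (m : ℕ) (j : Fin (2 * m)) : Fin (2 * m) :=
  if h : (j : ℕ) < m then ⟨2 * (j : ℕ) + 1, by omega⟩
  else ⟨2 * ((j : ℕ) - m), by omega⟩

/-- The red-black permutation on `n = 2m` indices is a bijection, and
conjugation `A ↦ P A Pᵀ` (whose entries are `(P A Pᵀ) j j' = A (redBlack j) (redBlack j')`)
maps a tridiagonal matrix to a `2×2` block matrix whose two diagonal `m × m` blocks are
diagonal matrices and whose off-diagonal blocks are (upper/lower) bidiagonal. -/
theorem redBlack_conjugation_of_tridiagonal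
    (m : ℕ) (A : Matrix (Fin (2 * m)) (Fin (2 * m)) ℝ)
    (htri : ∀ i j : Fin (2 * m),
      ((i : ℕ) + 1 < (j : ℕ) ∨ (j : ℕ) + 1 < (i : ℕ)) → A i j = 0) :
    Function.Bijective (redBlack m) ∧
      -- the two diagonal blocks are diagonal matrices
      (∀ j j' : Fin (2 * m), (j : ℕ) < m → (j' : ℕ) < m → j ≠ j' →
        A (redBlack m j) (redBlack m j') = 0) ∧
      (∀ j j' : Fin (2 * m), m ≤ (j : ℕ) → m ≤ (j' : ℕ) → j ≠ j' →
        A (redBlack m j) (redBlack m j') = 0) ∧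
      -- the upper-right block is bidiagonal
      (∀ j j' : Fin (2 * m), (j : ℕ) < m → m ≤ (j' : ℕ) →
        ((j' : ℕ) - m ≠ (j : ℕ) ∧ (j' : ℕ) - m ≠ (j : ℕ) + 1) →
        A (redBlack m j) (redBlack m j') = 0) ∧
      -- the lower-left block is bidiagonal
      (∀ j j' : Fin (2 * m), m ≤ (j : ℕ) → (j' : ℕ) < m →
        ((j : ℕ) - m ≠ (j' : ℕ) ∧ (j : ℕ) - m ≠ (j' : ℕ) + 1) →
        A (redBlack m j) (redBlack m j') = 0) := by
  have hinj : Function.Injective (redBlack m) := by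
    intro a b hab
    unfold redBlack at hab
    have := Fin.val_eq_of_eq hab
    apply Fin.ext
    split at this <;> split at this <;> simp at this <;> omega
  refine ⟨Finite.injective_iff_bijective.mp hinj, ?_, ?_, ?_, ?_⟩ <;>
  · intro j j' h1 h2 h3
    apply htri
    unfold redBlack
    have hne : (j:ℕ) ≠ (j':ℕ) := by
      first
      | exact fun h => h3 (Fin.ext h)
      | omega
    split_ifs <;> simp <;> omega
end
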